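/- Under the stationary AR(1) model with additive measurement error X_t* = α₀ + α₁ X_t + e_t, the population intercept of the naive regression of X_t* on X_{t-1}* equals φ₀* = (α₀ + α₁ φ₀/(1 − φ₁))(1 − φ₁ ω₁) where ω₁ = α₁²σ_ε²/(α₁²σ_ε² + σ_e²(1 − φ₁²)), i.e., φ₀* = E(X_t*)(1 − φ₁*). -/

import Mathlib

/-!
Measurement error independent of the signal adds `σe²` to the variance of `X*` but leaves its
lag-one autocovariance equal to `α₁² Cov(X_t, X_{t-1}) = α₁² φ₁ Var X`, the latter because
`ε_t` is independent of `X_{t-1}`. Hence the naive slope is `φ₁` attenuated by the reliability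
ratio `ω₁`, and since `X*` has constant mean the intercept is `E(X*) (1 - φ₁ ω₁)`.
-/

open MeasureTheory ProbabilityTheory Filter Matrix

noncomputable def expect {Ω : Type*} [MeasurableSpace Ω] (P : Measure Ω) (f : Ω → ℝ) : ℝ :=
  ∫ ω, f ω ∂P

noncomputable def cov {Ω : Type*} [MeasurableSpace Ω] (P : Measure Ω) (f g : Ω → ℝ) : ℝ :=
  expect P (fun ω => (f ω - expect P f) * (g ω - expect P g))

noncomputable def pvar {Ω : Type*} [MeasurableSpace Ω] (P : Measure Ω) (f : Ω → ℝ) : ℝ :=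
  cov P f f

section

variable {Ω : Type*} [MeasurableSpace Ω] {P : Measure Ω}

lemma cov_eq_covariance (f g : Ω → ℝ) : cov P f g = covariance f g P := rfl

lemma pvar_eq_covariance (f : Ω → ℝ) : pvar P f = covariance f f P := rfl

variable [IsProbabilityMeasure P] {X Y Z e f : Ω → ℝ}

lemma expect_affine_add (hX : Integrable X P) (he : Integrable e P) (a b : ℝ) :
    expect P (fun ω => a + b * X ω + e ω) = a + b * expect P X + expect P e := by
  simp only [expect]
  rw [integral_add (f := fun ω => a + b * X ω) ((integrable_const a).add (hX.const_mul b)) he,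
    integral_add (integrable_const a) (hX.const_mul b), integral_const_mul]
  simp

lemma memLp_affine_add (hX : MemLp X 2 P) (he : MemLp e 2 P) (a b : ℝ) :
    MemLp (fun ω => a + b * X ω + e ω) 2 P :=
  ((memLp_const a).add (hX.const_mul b)).add he

lemma covariance_affine_add_left (hX : MemLp X 2 P) (he : MemLp e 2 P) (hZ : MemLp Z 2 P)
    (a b : ℝ) :
    covariance (fun ω => a + b * X ω + e ω) Z P = b * covariance X Z P + covariance e Z P := by
  have hbX : MemLp (fun ω => b * X ω) 2 P := hX.const_mul b
  simp_rw [add_assoc]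
  rw [covariance_const_add_left (X := fun ω => b * X ω + e ω)
    ((hbX.add he).integrable one_le_two), ← covariance_const_mul_left]
  exact covariance_add_left hbX he hZ

lemma covariance_affine_add_right (hX : MemLp X 2 P) (he : MemLp e 2 P) (hZ : MemLp Z 2 P)
    (a b : ℝ) :
    covariance Z (fun ω => a + b * X ω + e ω) P = b * covariance Z X P + covariance Z e P := by
  rw [covariance_comm, covariance_affine_add_left hX he hZ, covariance_comm X,
    covariance_comm e]

lemma covariance_affine_add_affine_add (hX : MemLp X 2 P) (hY : MemLp Y 2 P)
    (he : MemLp e 2 P) (hf : MemLp f 2 P) (hXf : IndepFun X f P) (heY : IndepFun e Y P)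
    (a b c d : ℝ) :
    covariance (fun ω => a + b * X ω + e ω) (fun ω => c + d * Y ω + f ω) P
      = b * d * covariance X Y P + covariance e f P := by
  rw [covariance_affine_add_left hX he (memLp_affine_add hY hf c d),
    covariance_affine_add_right hY hf hX, covariance_affine_add_right hY hf he,
    hXf.covariance_eq_zero hX hf, heY.covariance_eq_zero he hY]
  ring

end

lemma attenuated_slope_eq (a φ s w : ℝ) {c : ℝ} (hc : c ≠ 0) :
    a * (φ * (s / c)) / (a * (s / c) + w) = φ * (a * s / (a * s + w * c)) := by
  have hnum : a * (φ * (s / c)) = φ * (a * s) / c := by ring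
  have hden : a * (s / c) + w = (a * s + w * c) / c := by field_simp
  rw [hnum, hden, div_div_div_cancel_right₀ hc, mul_div_assoc]

theorem naive_ar1_intercept_additive_error_general
    {Ω : Type*} [MeasurableSpace Ω] (P : Measure Ω) [IsProbabilityMeasure P]
    (X ε e Xstar : ℤ → Ω → ℝ) (φ0 φ1 α0 α1 σε σe : ℝ)
    (hφ : |φ1| < 1)
    (hAR : ∀ t ω, X t ω = φ0 + φ1 * X (t - 1) ω + ε t ω)
    (hεindep : ∀ t s : ℤ, s < t → IndepFun (ε t) (X s) P)
    (hXmean : ∀ t, expect P (X t) = φ0 / (1 - φ1))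
    (hXvar : ∀ t, pvar P (X t) = σε ^ 2 / (1 - φ1 ^ 2))
    (hM : ∀ t ω, Xstar t ω = α0 + α1 * X t ω + e t ω)
    (hemean : ∀ t, expect P (e t) = 0)
    (hevar : ∀ t, pvar P (e t) = σe ^ 2)
    (heX : ∀ t s : ℤ, IndepFun (e t) (X s) P)
    (hee : ∀ t s : ℤ, t ≠ s → IndepFun (e t) (e s) P)
    (hXint : ∀ t, Integrable (X t) P)
    (hXsq : ∀ t, Integrable (fun ω => X t ω ^ 2) P)
    (heint : ∀ t, Integrable (e t) P)
    (hesq : ∀ t, Integrable (fun ω => e t ω ^ 2) P) :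
    ∀ t : ℤ,
      expect P (Xstar t)
          - (cov P (Xstar t) (Xstar (t - 1)) / pvar P (Xstar (t - 1)))
            * expect P (Xstar (t - 1))
        = (α0 + α1 * φ0 / (1 - φ1))
            * (1 - φ1 * (α1 ^ 2 * σε ^ 2 / (α1 ^ 2 * σε ^ 2 + σe ^ 2 * (1 - φ1 ^ 2)))) := by
  intro t
  have hφ2 : 1 - φ1 ^ 2 ≠ 0 := by
    have := sq_lt_one_iff_abs_lt_one φ1 |>.mpr hφ
    linarith
  have hXL2 u : MemLp (X u) 2 P :=
    (memLp_two_iff_integrable_sq (hXint u).aestronglyMeasurable).mpr (hXsq u)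
  have heL2 u : MemLp (e u) 2 P :=
    (memLp_two_iff_integrable_sq (heint u).aestronglyMeasurable).mpr (hesq u)
  have hεL2 : MemLp (ε t) 2 P := by
    have : ε t = fun ω => X t ω - φ0 - φ1 * X (t - 1) ω := by
      funext ω; rw [hAR t ω]; ring
    rw [this]
    exact ((hXL2 t).sub (memLp_const φ0)).sub ((hXL2 (t - 1)).const_mul φ1)
  have hlag : t - 1 < t := by omega
  have hXstar u : Xstar u = fun ω => α0 + α1 * X u ω + e u ω := funext (hM u)
  have hmean u : expect P (Xstar u) = α0 + α1 * (φ0 / (1 - φ1)) := by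
    rw [hXstar, expect_affine_add (hXint u) (heint u), hXmean, hemean, add_zero]
  have hcovX : covariance (X t) (X (t - 1)) P = φ1 * (σε ^ 2 / (1 - φ1 ^ 2)) := by
    rw [show X t = fun ω => φ0 + φ1 * X (t - 1) ω + ε t ω from funext (hAR t),
      covariance_affine_add_left (hXL2 _) hεL2 (hXL2 _),
      (hεindep t _ hlag).covariance_eq_zero hεL2 (hXL2 _), ← pvar_eq_covariance, hXvar, add_zero]
  have hcov : cov P (Xstar t) (Xstar (t - 1)) = α1 ^ 2 * (φ1 * (σε ^ 2 / (1 - φ1 ^ 2))) := by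
    rw [cov_eq_covariance, hXstar, hXstar, covariance_affine_add_affine_add (hXL2 _) (hXL2 _)
      (heL2 _) (heL2 _) (heX _ _).symm (heX _ _), hcovX,
      (hee t _ hlag.ne').covariance_eq_zero (heL2 _) (heL2 _)]
    ring
  have hvar : pvar P (Xstar (t - 1)) = α1 ^ 2 * (σε ^ 2 / (1 - φ1 ^ 2)) + σe ^ 2 := by
    rw [pvar_eq_covariance, hXstar, covariance_affine_add_affine_add (hXL2 _) (hXL2 _)
      (heL2 _) (heL2 _) (heX _ _).symm (heX _ _), ← pvar_eq_covariance, ← pvar_eq_covariance,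
      hXvar, hevar]
    ring
  rw [hcov, hvar, hmean, hmean, attenuated_slope_eq _ _ _ _ hφ2]
  ring

/-- Under the stationary AR(1) model with additive measurement error, the
population intercept of the naive regression of `X* t` on `X* (t-1)`, namely
`E(X* t) - φ1* E(X* (t-1))`, equals `(α0 + α1 φ0/(1-φ1)) (1 - φ1 ω1)` where
`ω1 = α1²σε²/(α1²σε² + σe²(1-φ1²))`. -/
theorem naive_ar1_intercept_additive_error
    {Ω : Type*} [MeasurableSpace Ω] (P : Measure Ω) [IsProbabilityMeasure P]
    (X ε e Xstar : ℤ → Ω → ℝ) (φ0 φ1 α0 α1 σε σe : ℝ)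
    (hφ : |φ1| < 1) (hα1 : α1 ≠ 0)
    (hAR : ∀ t ω, X t ω = φ0 + φ1 * X (t - 1) ω + ε t ω)
    (hεmean : ∀ t, expect P (ε t) = 0)
    (hεvar : ∀ t, pvar P (ε t) = σε ^ 2)
    (hεindep : ∀ t s : ℤ, s < t → IndepFun (ε t) (X s) P)
    (hXmean : ∀ t, expect P (X t) = φ0 / (1 - φ1))
    (hXvar : ∀ t, pvar P (X t) = σε ^ 2 / (1 - φ1 ^ 2))
    (hM : ∀ t ω, Xstar t ω = α0 + α1 * X t ω + e t ω)
    (hemean : ∀ t, expect P (e t) = 0)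
    (hevar : ∀ t, pvar P (e t) = σe ^ 2)
    (heX : ∀ t s : ℤ, IndepFun (e t) (X s) P)
    (hee : ∀ t s : ℤ, t ≠ s → IndepFun (e t) (e s) P)
    (hXint : ∀ t, Integrable (X t) P)
    (hXsq : ∀ t, Integrable (fun ω => X t ω ^ 2) P)
    (heint : ∀ t, Integrable (e t) P)
    (hesq : ∀ t, Integrable (fun ω => e t ω ^ 2) P) :
    ∀ t : ℤ,
      expect P (Xstar t)
          - (cov P (Xstar t) (Xstar (t - 1)) / pvar P (Xstar (t - 1)))
            * expect P (Xstar (t - 1))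
        = (α0 + α1 * φ0 / (1 - φ1))
            * (1 - φ1 * (α1 ^ 2 * σε ^ 2 / (α1 ^ 2 * σε ^ 2 + σe ^ 2 * (1 - φ1 ^ 2)))) :=
  naive_ar1_intercept_additive_error_general P X ε e Xstar φ0 φ1 α0 α1 σε σe hφ hAR hεindep hXmean
    hXvar hM hemean hevar heX hee hXint hXsq heint hesq
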